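/- Suppose ν⁰ is a real eigenvector of B = Aᵀ with eigenvalue 0 and ν¹ satisfies Bν¹ = ν⁰, and ν² is a real eigenvector of B with real eigenvalue λ₂. Then F(x) = (ν²·x) · exp(−λ₂ · (ν¹·x)/(ν⁰·x)) is an autonomous first integral of dx/dt = Ax on any open set where ν⁰·x ≠ 0. -/

import Mathlib

/-!
Write `ℓᵢ y = νᵢ ⬝ᵥ y`. Along `x' = A x` the rate of change of `ℓᵢ` is `(Aᵀ νᵢ) ⬝ᵥ x`, so `ℓ₀` is
constant, `ℓ₁` grows at rate `ℓ₀` and `ℓ₂` at rate `λ₂ ℓ₂`. Hence `ℓ₁ / ℓ₀` grows at rate exactly `1`,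
and the factor `exp (-λ₂ ℓ₁ / ℓ₀)` cancels the exponential growth of `ℓ₂`.
-/

open Matrix

section Quotient

variable {𝕜 E : Type*} [NontriviallyNormedField 𝕜] [NormedAddCommGroup E] [NormedSpace 𝕜 E]
  {c d : E → 𝕜} {c' d' : E →L[𝕜] 𝕜} {x : E}

theorem HasFDerivAt.div_of_ne (hc : HasFDerivAt c c' x) (hd : HasFDerivAt d d' x)
    (hx : d x ≠ 0) :
    HasFDerivAt (fun y => c y / d y) ((d x ^ 2)⁻¹ • (d x • c' - c x • d')) x := by
  have hinv := (hasDerivAt_inv hx).comp_hasFDerivAt x hd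
  have hprod := hc.fun_mul hinv
  simp only [Function.comp_def, ← div_eq_mul_inv] at hprod
  refine hprod.congr_fderiv ?_
  ext v
  simp only [_root_.add_apply, _root_.smul_apply, smul_eq_mul, neg_mul, mul_neg, _root_.sub_apply]
  field_simp
  ring

end Quotient

theorem fderiv_mul_exp_div_apply_eq_zero {E : Type*} [NormedAddCommGroup E] [NormedSpace ℝ E]
    {f g h : E → ℝ} {f' g' h' : E →L[ℝ] ℝ} {x v : E} {c : ℝ}
    (hf : HasFDerivAt f f' x) (hg : HasFDerivAt g g' x) (hh : HasFDerivAt h h' x)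
    (hx : h x ≠ 0) (hfv : f' v = c * f x) (hgv : g' v = h x) (hhv : h' v = 0) :
    fderiv ℝ (fun y => f y * Real.exp (-c * (g y / h y))) x v = 0 := by
  have hq := hg.div_of_ne hh hx
  have hqv : ((h x ^ 2)⁻¹ • (h x • g' - g x • h')) v = 1 := by
    simp only [_root_.smul_apply, _root_.sub_apply, hgv, smul_eq_mul, hhv, mul_zero, sub_zero]
    field_simp
  rw [(hf.fun_mul (hq.const_mul (-c)).exp).fderiv]
  simp only [neg_mul, neg_smul, smul_neg, _root_.add_apply, _root_.neg_apply, _root_.smul_apply,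
    hqv, smul_eq_mul, mul_one, hfv]
  ring

theorem hasFDerivAt_dotProduct {ι : Type*} [Fintype ι] (ν x : ι → ℝ) :
    HasFDerivAt (ν ⬝ᵥ ·) (LinearMap.toContinuousLinearMap (dotProductBilin ℝ ℝ ν)) x :=
  (LinearMap.toContinuousLinearMap (dotProductBilin ℝ ℝ ν)).hasFDerivAt

theorem first_integral_zero_generalized_eigenvector_general
    (n : ℕ) (A : Matrix (Fin n) (Fin n) ℝ)
    (ν₀ ν₁ ν₂ : Fin n → ℝ) (lam₂ : ℝ)
    (heig₀ : Aᵀ.mulVec ν₀ = 0)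
    (hgen : Aᵀ.mulVec ν₁ = ν₀)
    (heig₂ : Aᵀ.mulVec ν₂ = lam₂ • ν₂) :
    ∀ x : Fin n → ℝ, ν₀ ⬝ᵥ x ≠ 0 →
      fderiv ℝ (fun y => (ν₂ ⬝ᵥ y) * Real.exp (-lam₂ * ((ν₁ ⬝ᵥ y) / (ν₀ ⬝ᵥ y))))
        x (A.mulVec x) = 0 := by
  intro x hx
  have hflow (ν : Fin n → ℝ) : ν ⬝ᵥ A *ᵥ x = Aᵀ *ᵥ ν ⬝ᵥ x := by
    rw [← dotProduct_transpose_mulVec, dotProduct_comm]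
  refine fderiv_mul_exp_div_apply_eq_zero (hasFDerivAt_dotProduct ν₂ x)
    (hasFDerivAt_dotProduct ν₁ x) (hasFDerivAt_dotProduct ν₀ x) hx ?_ ?_ ?_
  · simp [hflow, heig₂]
  · simp [hflow, hgen]
  · simp [hflow, heig₀]

/-- Theorem 1.6: suppose `Aᵀν⁰ = 0`, `Aᵀν¹ = ν⁰`, and `Aᵀν² = λ₂ν²`.  Then
`F(x) = (ν²·x)·exp(−λ₂·(ν¹·x)/(ν⁰·x))` is an autonomous first integral of
`dx/dt = Ax` wherever `ν⁰·x ≠ 0`. -/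
theorem first_integral_zero_generalized_eigenvector
    (n : ℕ) (A : Matrix (Fin n) (Fin n) ℝ)
    (ν₀ ν₁ ν₂ : Fin n → ℝ) (lam₂ : ℝ) (hν₀ : ν₀ ≠ 0) (hν₂ : ν₂ ≠ 0)
    (heig₀ : Aᵀ.mulVec ν₀ = 0)
    (hgen : Aᵀ.mulVec ν₁ = ν₀)
    (heig₂ : Aᵀ.mulVec ν₂ = lam₂ • ν₂) :
    ∀ x : Fin n → ℝ, ν₀ ⬝ᵥ x ≠ 0 →
      fderiv ℝ (fun y => (ν₂ ⬝ᵥ y) * Real.exp (-lam₂ * ((ν₁ ⬝ᵥ y) / (ν₀ ⬝ᵥ y))))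
        x (A.mulVec x) = 0 :=
  first_integral_zero_generalized_eigenvector_general n A ν₀ ν₁ ν₂ lam₂ heig₀ hgen heig₂
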